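/- Let $F$ be a field, let $D \ge 1$, and for each $k = 1, \ldots, D$ let $B^{(k)}$ be an invertible lower triangular $n_k \times n_k$ matrix over $F$. Let $S$ be a downward closed subset of the product index set $\prod_{k=1}^D \{1, \ldots, n_k\}$, i.e. if $\mathbf{i} \in S$ and $a_k \le i_k$ for all $k$ then $\mathbf{a} \in S$. Let $M$ be the Kronecker product matrix with entries $M_{\mathbf{a}, \mathbf{i}} = \prod_{k=1}^D B^{(k)}_{a_k, i_k}$. Then the restriction $M|_{S \times S}$ is invertible, and $\big(M|_{S \times S}\big)^{-1}$ has entries $\big[\big(M|_{S \times S}\big)^{-1}\big]_{\mathbf{i}, \mathbf{a}} = \prod_{k=1}^D \big[(B^{(k)})^{-1}\big]_{i_k, a_k}$ for $\mathbf{i}, \mathbf{a} \in S$. -/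

import Mathlib

/-! With `M` the Kronecker product of the `B k` and `N` that of their inverses, `M * N = 1`.
An index `a ∉ S` is not below any `i ∈ S`, so some `a k > i k` and lower triangularity kills
`M i a`; hence the `S × S` block of `M * N` is the product of the `S × S` blocks, and the block of
`N` is a right inverse of the block of `M`. -/

open Matrix

namespace Matrix

variable {ι R : Type*} [Fintype ι] [CommSemiring R]

def piKronecker {m n : ι → Type*} (B : ∀ k, Matrix (m k) (n k) R) :
    Matrix (∀ k, m k) (∀ k, n k) R :=
  fun a i => ∏ k, B k (a k) (i k)

theorem piKronecker_apply {m n : ι → Type*} (B : ∀ k, Matrix (m k) (n k) R) (a : ∀ k, m k)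
    (i : ∀ k, n k) : piKronecker B a i = ∏ k, B k (a k) (i k) :=
  rfl

theorem piKronecker_mul [DecidableEq ι] {l m n : ι → Type*} [∀ k, Fintype (m k)]
    (B : ∀ k, Matrix (l k) (m k) R) (C : ∀ k, Matrix (m k) (n k) R) :
    piKronecker B * piKronecker C = piKronecker fun k => B k * C k := by
  ext a i
  simp only [mul_apply, piKronecker_apply, Fintype.prod_sum, Finset.prod_mul_distrib]

theorem piKronecker_one {m : ι → Type*} [∀ k, DecidableEq (m k)] [DecidableEq (∀ k, m k)] :
    piKronecker (fun k => (1 : Matrix (m k) (m k) R)) = 1 := by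
  ext a i
  by_cases h : a = i
  · subst h
    simp only [piKronecker_apply, one_apply_eq, Finset.prod_const_one]
  · obtain ⟨k, hk⟩ := Function.ne_iff.mp h
    rw [piKronecker_apply, one_apply_ne h]
    exact Finset.prod_eq_zero (Finset.mem_univ k) (one_apply_ne hk)

/-- Lower triangularity is `BlockTriangular` with respect to the reversed order. -/
theorem piKronecker_apply_eq_zero_of_not_le {m : ι → Type*} [∀ k, LinearOrder (m k)]
    {B : ∀ k, Matrix (m k) (m k) R} (hB : ∀ k, (B k).BlockTriangular OrderDual.toDual)
    {i a : ∀ k, m k} (h : ¬a ≤ i) : piKronecker B i a = 0 := by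
  simp only [Pi.le_def, not_forall, not_le] at h
  obtain ⟨k, hk⟩ := h
  exact Finset.prod_eq_zero (Finset.mem_univ k) (hB k hk)

theorem submatrix_mul_submatrix_of_apply_eq_zero {l m n l' n' R : Type*} [Fintype m]
    [NonUnitalNonAssocSemiring R] (M : Matrix l m R) (N : Matrix m n R) (f : l' → l)
    (g : n' → n) (S : Set m) [DecidablePred (· ∈ S)]
    (hM : ∀ i a, a ∉ S → M (f i) a = 0) :
    M.submatrix f ((↑) : S → m) * N.submatrix (↑) g = (M * N).submatrix f g := by
  ext i j
  rw [submatrix_apply, mul_apply, ← Fintype.sum_subtype_add_sum_subtype (· ∈ S)]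
  have houtside : ∑ a : {a // a ∉ S}, M (f i) a * N a (g j) = 0 :=
    Finset.sum_eq_zero fun a _ => by rw [hM i a a.2, zero_mul]
  rw [houtside, add_zero]
  rfl

end Matrix

theorem kron_restricted_inverse_general {F : Type*} [Field F] (D : ℕ)
    (n : Fin D → ℕ)
    (B : ∀ k : Fin D, Matrix (Fin (n k)) (Fin (n k)) F)
    (hinv : ∀ k, IsUnit (B k))
    (hlow : ∀ k : Fin D, ∀ a i : Fin (n k), a < i → B k a i = 0)
    (S : Set ((k : Fin D) → Fin (n k))) [DecidablePred (· ∈ S)]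
    (hS : ∀ i ∈ S, ∀ a : (k : Fin D) → Fin (n k), (∀ k, a k ≤ i k) → a ∈ S)
    (M : Matrix ((k : Fin D) → Fin (n k)) ((k : Fin D) → Fin (n k)) F)
    (hM : ∀ a i : (k : Fin D) → Fin (n k), M a i = ∏ k, B k (a k) (i k)) :
    IsUnit (M.submatrix (Subtype.val : S → _) (Subtype.val : S → _)) ∧
      ∀ i a : S,
        (M.submatrix (Subtype.val : S → _) (Subtype.val : S → _))⁻¹ i a =
          ∏ k, (B k)⁻¹ (i.1 k) (a.1 k) := by
  obtain rfl : M = piKronecker B := Matrix.ext hM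
  have hBinv : ∀ k, B k * (B k)⁻¹ = 1 := fun k =>
    mul_nonsing_inv _ ((isUnit_iff_isUnit_det _).mp (hinv k))
  have hvanish : ∀ (i : S) a, a ∉ S → piKronecker B i a = 0 := fun i a ha =>
    piKronecker_apply_eq_zero_of_not_le (fun k => hlow k) fun hai => ha (hS i i.2 a hai)
  have hright : (piKronecker B).submatrix (Subtype.val : S → _) (Subtype.val : S → _) *
      (piKronecker fun k => (B k)⁻¹).submatrix (Subtype.val : S → _) (Subtype.val : S → _) =
        1 :=
    calc _ = (piKronecker B * piKronecker fun k => (B k)⁻¹).submatrix Subtype.val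
            Subtype.val := submatrix_mul_submatrix_of_apply_eq_zero _ _ _ _ S hvanish
      _ = 1 := by rw [piKronecker_mul, funext hBinv, piKronecker_one,
          submatrix_one _ Subtype.val_injective]
  refine ⟨(isUnit_iff_isUnit_det _).mpr (isUnit_det_of_right_inverse hright), fun i a => ?_⟩
  rw [inv_eq_right_inv hright]
  rfl

/-- For invertible lower triangular matrices `B k` and a downward
closed subset `S` of the product index set, the `S × S` block of the Kronecker
product matrix `M` is invertible and its inverse has entries
`∏ k, (B k)⁻¹ (i k) (a k)`. -/
theorem kron_restricted_inverse {F : Type*} [Field F] (D : ℕ) (hD : 1 ≤ D)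
    (n : Fin D → ℕ)
    (B : ∀ k : Fin D, Matrix (Fin (n k)) (Fin (n k)) F)
    (hinv : ∀ k, IsUnit (B k))
    (hlow : ∀ k : Fin D, ∀ a i : Fin (n k), a < i → B k a i = 0)
    (S : Set ((k : Fin D) → Fin (n k))) [DecidablePred (· ∈ S)]
    (hS : ∀ i ∈ S, ∀ a : (k : Fin D) → Fin (n k), (∀ k, a k ≤ i k) → a ∈ S)
    (M : Matrix ((k : Fin D) → Fin (n k)) ((k : Fin D) → Fin (n k)) F)
    (hM : ∀ a i : (k : Fin D) → Fin (n k), M a i = ∏ k, B k (a k) (i k)) :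
    IsUnit (M.submatrix (Subtype.val : S → _) (Subtype.val : S → _)) ∧
      ∀ i a : S,
        (M.submatrix (Subtype.val : S → _) (Subtype.val : S → _))⁻¹ i a =
          ∏ k, (B k)⁻¹ (i.1 k) (a.1 k) :=
  kron_restricted_inverse_general D n B hinv hlow S hS M hM
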